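/- Let v and u be K-adjacent x-vertices (some K-edge joins v and u), and suppose a(v, K, K, 0) > R, a(v, I, K, 0) ≤ R, a(u, K, K, 0) > R, and a(u, I, K, 0) ≤ R. Then for every feasible solution x*, the output values of the local algorithm satisfy x_v + x_u ≥ ω(x*). -/
import Mathlib


/-- An undirected multigraph with two-coloured vertices and two-coloured edges.
`isX v` means `v` is an x-vertex (otherwise `v` is a 0-vertex);
`isK e` means `e` is a K-edge (otherwise `e` is an I-edge). -/
structure ColoredMultigraph (V : Type) (E : Type) where
  ends : E → Sym2 V
  isX : V → Prop
  isK : E → Prop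

namespace ColoredMultigraph

variable {V E : Type} (G : ColoredMultigraph V E)

/-- Edge `e` joins vertices `a` and `b`. -/
def Joins (e : E) (a b : V) : Prop := G.ends e = s(a, b)

/-- `AltWalk G v c c' u n` : there is an alternating walk from `v` to `u` whose
first edge has colour `c` (`true` = K-edge, `false` = I-edge), whose last edge
has colour `c'`, and whose K-length (number of K-edges) is `n`. -/
inductive AltWalk : V → Bool → Bool → V → ℕ → Prop
  | single (e : E) (a b : V) (c : Bool) :
      G.Joins e a b → (G.isK e ↔ c = true) → AltWalk a c c b (cond c 1 0)
  | cons (e : E) (a b : V) (c c' : Bool) (u : V) (n : ℕ) :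
      G.Joins e a b → (G.isK e ↔ c = true) → AltWalk b (!c) c' u n →
      AltWalk a c c' u (cond c 1 0 + n)

/-- `a(v,X,Y,0)` : the minimum K-length of a `(v,X,Y,0)`-walk, that is, a walk
from `v` to some 0-vertex starting with an X-edge and ending with a Y-edge
(`∞` if no such walk exists). -/
noncomputable def walkInf (v : V) (X Y : Bool) : ℕ∞ :=
  sInf {n : ℕ∞ | ∃ m : ℕ, n = m ∧ ∃ u, G.AltWalk v X Y u m ∧ ¬ G.isX u}

/-- `A(v,X)` : the maximum K-length of an alternating walk starting at `v` with
an X-edge (`∞` if walks of arbitrarily large K-length exist). -/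
noncomputable def walkSup (v : V) (X : Bool) : ℕ∞ :=
  sSup {n : ℕ∞ | ∃ m : ℕ, n = m ∧ ∃ Y u, G.AltWalk v X Y u m}

/-- `b(v,X,Y,0) = min {a(v,X,Y,0), R}`. -/
noncomputable def bnd (R : ℕ) (v : V) (X Y : Bool) : ℕ∞ :=
  min (G.walkInf v X Y) (R : ℕ∞)

/-- `B(v,X) = min {A(v,X), R}`. -/
noncomputable def Bnd (R : ℕ) (v : V) (X : Bool) : ℕ∞ :=
  min (G.walkSup v X) (R : ℕ∞)

/-- The value `p_v` chosen by the local algorithm: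
`p_v = b(v,I,K,0)` if `a(v,K,K,0) ≤ R`, and
`p_v = min {b(v,I,K,0), B(v,K)}` otherwise. -/
noncomputable def pv (R : ℕ) (v : V) : ℕ∞ :=
  if G.walkInf v true true ≤ (R : ℕ∞) then G.bnd R v false true
  else min (G.bnd R v false true) (G.Bnd R v true)

/-- The value `q_v` chosen by the local algorithm:
`q_v = b(v,K,K,0)` if `a(v,I,K,0) ≤ R`, and
`q_v = min {b(v,K,K,0), B(v,I)}` otherwise. -/
noncomputable def qv (R : ℕ) (v : V) : ℕ∞ :=
  if G.walkInf v false true ≤ (R : ℕ∞) then G.bnd R v true true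
  else min (G.bnd R v true true) (G.Bnd R v false)

open Classical in
/-- The output value of the local algorithm: `p_v / (p_v + q_v)` at an x-vertex
`v`, and `0` at a 0-vertex. -/
noncomputable def xval (R : ℕ) (v : V) : ℝ :=
  if G.isX v then
    ((G.pv R v).toNat : ℝ) / (((G.pv R v).toNat : ℝ) + ((G.qv R v).toNat : ℝ))
  else 0

/-- Structural assumptions: every x-vertex is incident to at least one K-edge
and at least one I-edge, every 0-vertex is incident to exactly one edge, and
every edge has at least one x-vertex endpoint. -/
def WellFormed : Prop :=
  (∀ v, G.isX v → ∃ e, v ∈ G.ends e ∧ G.isK e) ∧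
  (∀ v, G.isX v → ∃ e, v ∈ G.ends e ∧ ¬ G.isK e) ∧
  (∀ v, ¬ G.isX v → ∃! e, v ∈ G.ends e) ∧
  (∀ e a b, G.Joins e a b → G.isX a ∨ G.isX b)

/-- A feasible solution: nonnegative, zero at 0-vertices, and satisfying
`x a + x b ≤ 1` for every I-edge `{a, b}`. -/
def Feasible (x : V → ℝ) : Prop :=
  (∀ a, 0 ≤ x a) ∧ (∀ a, ¬ G.isX a → x a = 0) ∧
  (∀ e a b, G.Joins e a b → ¬ G.isK e → x a + x b ≤ 1)

/-- The utility `ω(x)` of a solution: the minimum (infimum) over K-edges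
`{a, b}` of `x a + x b`. -/
noncomputable def utility (x : V → ℝ) : ℝ :=
  sInf {r : ℝ | ∃ e a b, G.Joins e a b ∧ G.isK e ∧ r = x a + x b}

end ColoredMultigraph


namespace ColoredMultigraph

variable {V E : Type} (G : ColoredMultigraph V E)

lemma joins_symm {e : E} {a b : V} (h : G.Joins e a b) : G.Joins e b a := by
  unfold Joins at h ⊢; rw [h, Sym2.eq_swap]

lemma walkInf_le {v u : V} {X Y : Bool} {m : ℕ} (hw : G.AltWalk v X Y u m)
    (hu : ¬ G.isX u) : G.walkInf v X Y ≤ (m : ℕ∞) :=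
  sInf_le ⟨m, rfl, u, hw, hu⟩

lemma exists_walk_of_walkInf_le {v : V} {X Y : Bool} {R : ℕ}
    (h : G.walkInf v X Y ≤ (R : ℕ∞)) :
    ∃ (m : ℕ) (u : V), G.AltWalk v X Y u m ∧ ¬ G.isX u ∧ (m : ℕ∞) ≤ (R : ℕ∞) := by
  by_contra hc
  push_neg at hc
  have hlow : ((R : ℕ∞) + 1) ≤ G.walkInf v X Y := by
    apply le_sInf
    rintro n ⟨m, rfl, w, hw, hxw⟩
    exact Order.add_one_le_of_lt (hc m w hw hxw)
  have h2 : ((R + 1 : ℕ) : ℕ∞) ≤ ((R : ℕ) : ℕ∞) := by exact_mod_cast hlow.trans h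
  have := Nat.cast_le.mp h2
  omega

lemma exists_last_K {a u : V} {X Y : Bool} {n : ℕ} (h : G.AltWalk a X Y u n)
    (hY : Y = true) : ∃ (e : E) (y : V), G.Joins e y u ∧ G.isK e := by
  induction h with
  | single e a b c hj hk => exact ⟨e, a, hj, hk.mpr hY⟩
  | cons e a b c c' u n hj hk tail ih => exact ih hY

end ColoredMultigraph

/-- Let `v` and `u` be K-adjacent x-vertices, and suppose
`a(v,K,K,0) > R`, `a(v,I,K,0) ≤ R`, `a(u,K,K,0) > R`, and `a(u,I,K,0) ≤ R`.
Then for every feasible solution `x*`, the output values of the local algorithm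
satisfy `x_v + x_u ≥ ω(x*)`. -/
theorem stmt_15 {V E : Type} (G : ColoredMultigraph V E) (hG : G.WellFormed)
    (R : ℕ) (hR : 1 ≤ R) (v u : V) (hv : G.isX v) (hu : G.isX u)
    (hadj : ∃ e, G.Joins e v u ∧ G.isK e)
    (hvKK : (R : ℕ∞) < G.walkInf v true true)
    (hvIK : G.walkInf v false true ≤ (R : ℕ∞))
    (huKK : (R : ℕ∞) < G.walkInf u true true)
    (huIK : G.walkInf u false true ≤ (R : ℕ∞))
    (xstar : V → ℝ) (hxstar : G.Feasible xstar) :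
    G.utility xstar ≤ G.xval R v + G.xval R u := by
  obtain ⟨e, he, heK⟩ := hadj
  -- extract short (v,I,K,0)- and (u,I,K,0)-walks
  obtain ⟨m₁, z₁, hw₁, hz₁, hm₁⟩ := G.exists_walk_of_walkInf_le hvIK
  obtain ⟨m₂, z₂, hw₂, hz₂, hm₂⟩ := G.exists_walk_of_walkInf_le huIK
  -- compose: (u,K,K,0)-walk of K-length 1+m₁, and (v,K,K,0)-walk of length 1+m₂
  have hwu : G.AltWalk u true true z₁ (1 + m₁) := by
    have := ColoredMultigraph.AltWalk.cons (G := G) e u v true true z₁ m₁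
      (G.joins_symm he) (iff_of_true heK rfl) hw₁
    simpa using this
  have hwv : G.AltWalk v true true z₂ (1 + m₂) := by
    have := ColoredMultigraph.AltWalk.cons (G := G) e v u true true z₂ m₂
      he (iff_of_true heK rfl) hw₂
    simpa using this
  -- hence R < 1 + m₁ and R < 1 + m₂, so m₁ = m₂ = R (as naturals ≤ R)
  have hRm₁ : (R : ℕ∞) ≤ (m₁ : ℕ∞) := by
    have h1 : (R : ℕ∞) < ((1 + m₁ : ℕ) : ℕ∞) := by
      refine lt_of_lt_of_le huKK (G.walkInf_le ?_ hz₁)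
      exact_mod_cast hwu
    have : R < 1 + m₁ := by exact_mod_cast h1
    exact_mod_cast Nat.lt_succ_iff.mp (by omega)
  have hRm₂ : (R : ℕ∞) ≤ (m₂ : ℕ∞) := by
    have h1 : (R : ℕ∞) < ((1 + m₂ : ℕ) : ℕ∞) := by
      refine lt_of_lt_of_le hvKK (G.walkInf_le ?_ hz₂)
      exact_mod_cast hwv
    have : R < 1 + m₂ := by exact_mod_cast h1
    exact_mod_cast Nat.lt_succ_iff.mp (by omega)
  -- walkInf v false true = R and likewise for u
  have hIvlow : (R : ℕ∞) ≤ G.walkInf v false true := by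
    apply le_sInf
    rintro n ⟨m, rfl, w, hw, hxw⟩
    have hwum : G.AltWalk u true true w (1 + m) := by
      have := ColoredMultigraph.AltWalk.cons (G := G) e u v true true w m
        (G.joins_symm he) (iff_of_true heK rfl) hw
      simpa using this
    have h1 : (R : ℕ∞) < ((1 + m : ℕ) : ℕ∞) := by
      refine lt_of_lt_of_le huKK (G.walkInf_le ?_ hxw)
      exact_mod_cast hwum
    have : R < 1 + m := by exact_mod_cast h1
    exact_mod_cast Nat.lt_succ_iff.mp (by omega)
  have hIulow : (R : ℕ∞) ≤ G.walkInf u false true := by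
    apply le_sInf
    rintro n ⟨m, rfl, w, hw, hxw⟩
    have hwvm : G.AltWalk v true true w (1 + m) := by
      have := ColoredMultigraph.AltWalk.cons (G := G) e v u true true w m
        he (iff_of_true heK rfl) hw
      simpa using this
    have h1 : (R : ℕ∞) < ((1 + m : ℕ) : ℕ∞) := by
      refine lt_of_lt_of_le hvKK (G.walkInf_le ?_ hxw)
      exact_mod_cast hwvm
    have : R < 1 + m := by exact_mod_cast h1
    exact_mod_cast Nat.lt_succ_iff.mp (by omega)
  have hIv : G.walkInf v false true = (R : ℕ∞) := le_antisymm hvIK hIvlow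
  have hIu : G.walkInf u false true = (R : ℕ∞) := le_antisymm huIK hIulow
  -- walkSup v true ≥ R and walkSup u true ≥ R
  have hSv : (R : ℕ∞) ≤ G.walkSup v true := by
    refine le_trans ?_ (le_sSup ⟨1 + m₂, rfl, true, z₂, hwv⟩)
    calc (R : ℕ∞) ≤ (m₂ : ℕ∞) := hRm₂
      _ ≤ ((1 + m₂ : ℕ) : ℕ∞) := by exact_mod_cast Nat.le_add_left _ _
  have hSu : (R : ℕ∞) ≤ G.walkSup u true := by
    refine le_trans ?_ (le_sSup ⟨1 + m₁, rfl, true, z₁, hwu⟩)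
    calc (R : ℕ∞) ≤ (m₁ : ℕ∞) := hRm₁
      _ ≤ ((1 + m₁ : ℕ) : ℕ∞) := by exact_mod_cast Nat.le_add_left _ _
  -- compute pv and qv
  have hpv : G.pv R v = (R : ℕ∞) := by
    rw [ColoredMultigraph.pv, if_neg (not_le.mpr hvKK), ColoredMultigraph.bnd,
      ColoredMultigraph.Bnd, hIv]
    simp [min_eq_right hSv]
  have hpu : G.pv R u = (R : ℕ∞) := by
    rw [ColoredMultigraph.pv, if_neg (not_le.mpr huKK), ColoredMultigraph.bnd,
      ColoredMultigraph.Bnd, hIu]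
    simp [min_eq_right hSu]
  have hqv : G.qv R v = (R : ℕ∞) := by
    rw [ColoredMultigraph.qv, if_pos hvIK, ColoredMultigraph.bnd]
    exact min_eq_right hvKK.le
  have hqu : G.qv R u = (R : ℕ∞) := by
    rw [ColoredMultigraph.qv, if_pos huIK, ColoredMultigraph.bnd]
    exact min_eq_right huKK.le
  -- so xval = 1/2 at both v and u
  have hRpos : (0 : ℝ) < (R : ℝ) := by exact_mod_cast hR
  have hxv : G.xval R v = 1 / 2 := by
    rw [ColoredMultigraph.xval, if_pos hv, hpv, hqv]
    simp only [ENat.toNat_coe]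
    rw [div_eq_iff (by positivity)]
    ring
  have hxu : G.xval R u = 1 / 2 := by
    rw [ColoredMultigraph.xval, if_pos hu, hpu, hqu]
    simp only [ENat.toNat_coe]
    rw [div_eq_iff (by positivity)]
    ring
  rw [hxv, hxu]
  -- it remains to show utility ≤ 1
  obtain ⟨e', y, hj', hK'⟩ := G.exists_last_K hw₁ rfl
  have hy : G.isX y := by
    rcases hG.2.2.2 e' y z₁ hj' with h | h
    · exact h
    · exact absurd h hz₁
  obtain ⟨eI, hyI, hInotK⟩ := hG.2.1 y hy
  obtain ⟨w, hw⟩ := Sym2.mem_iff_exists.mp hyI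
  have hjI : G.Joins eI y w := hw
  have hyle : xstar y ≤ 1 := by
    have := hxstar.2.2 eI y w hjI hInotK
    have := hxstar.1 w
    linarith
  have hz0 : xstar z₁ = 0 := hxstar.2.1 z₁ hz₁
  have hbdd : BddBelow {r : ℝ | ∃ e a b, G.Joins e a b ∧ G.isK e ∧ r = xstar a + xstar b} := by
    refine ⟨0, ?_⟩
    rintro r ⟨e, a, b, _, _, rfl⟩
    exact add_nonneg (hxstar.1 a) (hxstar.1 b)
  have hutil : G.utility xstar ≤ xstar y + xstar z₁ :=
    csInf_le hbdd ⟨e', y, z₁, hj', hK', rfl⟩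
  rw [hz0] at hutil
  linarith
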